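/- For a prime p and digit sets D_1, D_2 ⊆ {0,...,p-1} such that d_1 + d_2 ≤ p - 1 for all d_1 ∈ D_1, d_2 ∈ D_2, the Minkowski sum satisfies Σ_p(D_1) + Σ_p(D_2) = Σ_p(D_1 + D_2), where D_1 + D_2 = {d_1 + d_2 : d_i ∈ D_i}. -/

import Mathlib

open scoped Pointwise

/-- The `k`-th digit of the `p`-adic expansion of `x`, i.e. `x = ∑ α_k p^k` with
`α_k ∈ {0,...,p-1}`. -/
noncomputable def padicDigit (p : ℕ) [Fact p.Prime] (x : ℤ_[p]) (k : ℕ) : ℕ :=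
  x.appr (k + 1) / p ^ k % p

/-- `Σ_p(D)`: the set of `p`-adic integers all of whose `p`-adic digits lie in `D`. -/
def SigmaSet (p : ℕ) [Fact p.Prime] (D : Set ℕ) : Set ℤ_[p] :=
  {x | ∀ k, padicDigit p x k ∈ D}

/-! Without carries, the digits of `x + y` are the digitwise sums: the truncations `x.appr n`
are the partial sums `∑_{k<n} α_k p^k` of the digit expansion, and these add without overflowing
`p ^ n`. Conversely, any digit sequence in `{0,…,p-1}` is realised by a `p`-adic integer, and a
`p`-adic integer is determined by its digits. -/

open Finset

section BaseExpansion

variable {b : ℕ} {d : ℕ → ℕ}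

theorem sum_digit_mul_pow_lt (hd : ∀ k, d k < b) (n : ℕ) :
    ∑ k ∈ range n, d k * b ^ k < b ^ n := by
  induction n with
  | zero => simp
  | succ n ih =>
    calc ∑ k ∈ range (n + 1), d k * b ^ k
        < b ^ n + d n * b ^ n := by rw [sum_range_succ]; omega
      _ = (d n + 1) * b ^ n := by ring
      _ ≤ b * b ^ n := Nat.mul_le_mul_right _ (hd n)
      _ = b ^ (n + 1) := by ring

theorem sum_digit_mul_pow_div_pow_mod (hd : ∀ k, d k < b) (n : ℕ) :
    (∑ k ∈ range (n + 1), d k * b ^ k) / b ^ n % b = d n := by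
  have hb : 0 < b ^ n := pow_pos (Nat.zero_lt_of_lt (hd 0)) n
  rw [sum_range_succ, Nat.add_mul_div_right _ _ hb, Nat.div_eq_of_lt (sum_digit_mul_pow_lt hd n),
    zero_add, Nat.mod_eq_of_lt (hd n)]

end BaseExpansion

namespace PadicInt

variable {p : ℕ} [Fact p.Prime]

theorem appr_mod_pow (x : ℤ_[p]) {m n : ℕ} (h : m ≤ n) : x.appr n % p ^ m = x.appr m := by
  rw [← (Nat.modEq_iff_dvd' (x.appr_mono h)).mpr (x.dvd_appr_sub_appr m n h),
    Nat.mod_eq_of_lt (x.appr_lt m)]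

theorem appr_eq_of_toZModPow_eq {x : ℤ_[p]} {n a : ℕ} (ha : a < p ^ n)
    (h : toZModPow n x = a) : x.appr n = a := by
  have hval := congrArg ZMod.val h
  rwa [ZMod.val_natCast_of_lt ha, show toZModPow n x = (x.appr n : ZMod (p ^ n)) from rfl,
    ZMod.val_natCast_of_lt (x.appr_lt n)] at hval

theorem appr_add_of_lt {x y : ℤ_[p]} {n : ℕ} (h : x.appr n + y.appr n < p ^ n) :
    (x + y).appr n = x.appr n + y.appr n :=
  appr_eq_of_toZModPow_eq h (by rw [map_add, Nat.cast_add]; rfl)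

theorem eq_of_appr_eq {x y : ℤ_[p]} (h : ∀ n, x.appr n = y.appr n) : x = y :=
  ext_of_toZModPow.mp fun n => congrArg ((↑) : ℕ → ZMod (p ^ n)) (h n)

theorem exists_appr_eq_sum {d : ℕ → ℕ} (hd : ∀ k, d k < p) :
    ∃ x : ℤ_[p], ∀ n, x.appr n = ∑ k ∈ range n, d k * p ^ k := by
  set s : ℕ → ℤ := fun n => ((∑ k ∈ range n, d k * p ^ k : ℕ) : ℤ)
  have hs : ∀ i, (p : ℤ) ^ i ∣ s (i + 1) - s i := fun i =>
    ⟨d i, by simp only [s, sum_range_succ]; push_cast; ring⟩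
  refine ⟨ofIntSeq _ (isCauSeq_padicNorm_of_pow_dvd_sub s p hs), fun n => ?_⟩
  refine appr_eq_of_toZModPow_eq (sum_digit_mul_pow_lt hd n) ?_
  rw [toZModPow_ofIntSeq_of_pow_dvd_sub s p hs n, Int.cast_natCast]

end PadicInt

section Digits

variable {p : ℕ} [Fact p.Prime]

theorem appr_eq_sum_padicDigit (x : ℤ_[p]) (n : ℕ) :
    x.appr n = ∑ k ∈ range n, padicDigit p x k * p ^ k := by
  induction n with
  | zero => simpa using x.appr_lt 0
  | succ n ih =>
    calc x.appr (n + 1) = x.appr (n + 1) % p ^ (n + 1) := (x.appr_mod_pow le_rfl).symm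
      _ = x.appr n + p ^ n * padicDigit p x n := by
        rw [Nat.mod_pow_succ, x.appr_mod_pow n.le_succ, padicDigit]
      _ = ∑ k ∈ range (n + 1), padicDigit p x k * p ^ k := by rw [sum_range_succ, ih, mul_comm]

theorem padicDigit_eq_of_appr_eq {x : ℤ_[p]} {d : ℕ → ℕ} (hd : ∀ k, d k < p)
    (h : ∀ n, x.appr n = ∑ k ∈ range n, d k * p ^ k) (k : ℕ) : padicDigit p x k = d k := by
  rw [padicDigit, h, sum_digit_mul_pow_div_pow_mod hd]

theorem exists_padicDigit_eq {d : ℕ → ℕ} (hd : ∀ k, d k < p) :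
    ∃ x : ℤ_[p], ∀ k, padicDigit p x k = d k :=
  (PadicInt.exists_appr_eq_sum hd).imp fun _ hx => padicDigit_eq_of_appr_eq hd hx

theorem eq_of_padicDigit_eq {x y : ℤ_[p]} (h : ∀ k, padicDigit p x k = padicDigit p y k) :
    x = y :=
  PadicInt.eq_of_appr_eq fun n => by simp only [appr_eq_sum_padicDigit, h]

theorem padicDigit_add {x y : ℤ_[p]} (h : ∀ k, padicDigit p x k + padicDigit p y k < p)
    (k : ℕ) :
    padicDigit p (x + y) k = padicDigit p x k + padicDigit p y k := by
  refine padicDigit_eq_of_appr_eq h (fun n => ?_) k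
  have hsum :
      x.appr n + y.appr n = ∑ k ∈ range n, (padicDigit p x k + padicDigit p y k) * p ^ k := by
    simp only [appr_eq_sum_padicDigit x, appr_eq_sum_padicDigit y, add_mul, sum_add_distrib]
  rw [PadicInt.appr_add_of_lt (hsum ▸ sum_digit_mul_pow_lt h n), hsum]

end Digits

theorem sigmaSet_minkowski_sum_no_carry_general (p : ℕ) [Fact p.Prime] (D₁ D₂ : Set ℕ)
    (hcarry : ∀ d₁ ∈ D₁, ∀ d₂ ∈ D₂, d₁ + d₂ ≤ p - 1) :
    SigmaSet p D₁ + SigmaSet p D₂ = SigmaSet p (D₁ + D₂) := by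
  have hp : 0 < p := (Fact.out : p.Prime).pos
  have no_carry : ∀ {a b}, a ∈ D₁ → b ∈ D₂ → a + b < p := fun ha hb => by
    have := hcarry _ ha _ hb; omega
  ext z
  constructor
  · rintro ⟨x, hx, y, hy, rfl⟩ k
    rw [padicDigit_add fun k => no_carry (hx k) (hy k)]
    exact Set.add_mem_add (hx k) (hy k)
  · intro hz
    choose d₁ h₁ d₂ h₂ hd using fun k => Set.mem_add.mp (hz k)
    have hd_lt : ∀ k, d₁ k + d₂ k < p := fun k => no_carry (h₁ k) (h₂ k)
    obtain ⟨x, hx⟩ := exists_padicDigit_eq fun k => (Nat.le_add_right _ _).trans_lt (hd_lt k)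
    obtain ⟨y, hy⟩ := exists_padicDigit_eq fun k => (Nat.le_add_left _ _).trans_lt (hd_lt k)
    refine ⟨x, fun k => hx k ▸ h₁ k, y, fun k => hy k ▸ h₂ k,
      eq_of_padicDigit_eq fun k => ?_⟩
    rw [padicDigit_add (fun k => hx k ▸ hy k ▸ hd_lt k), hx, hy, hd]

/-- If d₁ + d₂ ≤ p - 1 for all d₁ ∈ D₁, d₂ ∈ D₂ (no carries), then
Σ_p(D₁) + Σ_p(D₂) = Σ_p(D₁ + D₂). -/
theorem sigmaSet_minkowski_sum_no_carry (p : ℕ) [Fact p.Prime] (D₁ D₂ : Set ℕ)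
    (hD₁ : ∀ d ∈ D₁, d < p) (hD₂ : ∀ d ∈ D₂, d < p)
    (hcarry : ∀ d₁ ∈ D₁, ∀ d₂ ∈ D₂, d₁ + d₂ ≤ p - 1) :
    SigmaSet p D₁ + SigmaSet p D₂ = SigmaSet p (D₁ + D₂) :=
  sigmaSet_minkowski_sum_no_carry_general p D₁ D₂ hcarry
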